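/- For every measurable g : S → (0,∞), one has λ · E[ g(ξ_N) / ( g(ξ_N) + Σ_{0 ≤ j < N} g(ξ_j) ) ] = 1 − e^{−λ}. -/

import Mathlib

open MeasureTheory ProbabilityTheory

universe u v

/-- The codomain family for the joint family `(N, ξ₀, ξ₁, …)`: the index `none` corresponds
to the `ℕ`-valued variable `N` and `some i` to the `S`-valued mark `ξ i`. -/
def stmt16Fam (S : Type u) : Option ℕ → Type u
  | none => ULift ℕ
  | some _ => S

def stmt16FamMS (S : Type u) [MeasurableSpace S] :
    ∀ o : Option ℕ, MeasurableSpace (stmt16Fam S o)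
  | none => inferInstanceAs (MeasurableSpace (ULift ℕ))
  | some _ => inferInstanceAs (MeasurableSpace S)

def stmt16FamFun {Ω : Type v} {S : Type u} (N : Ω → ℕ) (ξ : ℕ → Ω → S) :
    ∀ o : Option ℕ, Ω → stmt16Fam S o
  | none => fun ω => ULift.up (N ω)
  | some i => ξ i

/-!
On the event `{N = k}` the integrand is `g(ξ_k) / Σ_{i ≤ k} g(ξ_i)`, a function of the marks
`ξ_0, …, ξ_k` alone. Since `N` is independent of the marks, its contribution to the expectation
is `P(N = k)` times the expectation of this ratio under the product law `π^{k+1}`, and by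
exchangeability of the `k + 1` coordinates the ratio has expectation `1 / (k + 1)`. Hence
`λ E[…] = Σ_k λ e^{-λ} λ^k / (k + 1)! = 1 - e^{-λ}`.
-/

lemma measurable_apply_nat_index {Ω α : Type*} [MeasurableSpace Ω] [MeasurableSpace α]
    {N : Ω → ℕ} (hN : Measurable N) {F : ℕ → Ω → α} (hF : ∀ k, Measurable (F k)) :
    Measurable fun ω => F (N ω) ω :=
  (measurable_from_prod_countable_left (f := fun p : Ω × ℕ => F p.2 p.1) hF).comp
    (measurable_id.prodMk hN)

lemma integrable_div_of_nonneg_of_le {α : Type*} [MeasurableSpace α] {μ : Measure α}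
    [IsFiniteMeasure μ] {a b : α → ℝ} (hab : Measurable fun x => a x / b x)
    (ha : ∀ x, 0 ≤ a x) (hle : ∀ x, a x ≤ b x) : Integrable (fun x => a x / b x) μ := by
  refine .of_bound hab.aestronglyMeasurable 1 (ae_of_all _ fun x => ?_)
  rw [Real.norm_of_nonneg (div_nonneg (ha x) ((ha x).trans (hle x)))]
  exact div_le_one_of_le₀ (hle x) ((ha x).trans (hle x))

lemma integral_eq_tsum_setIntegral_fiber {Ω β E : Type*} [MeasurableSpace Ω] [MeasurableSpace β]
    [Countable β] [MeasurableSingletonClass β] [NormedAddCommGroup E] [NormedSpace ℝ E]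
    {P : Measure Ω} {N : Ω → β} (hN : Measurable N) {f : Ω → E} (hf : Integrable f P) :
    ∫ ω, f ω ∂P = ∑' k, ∫ ω in N ⁻¹' {k}, f ω ∂P := by
  have h := integral_iUnion (fun k => hN (measurableSet_singleton k))
    (fun i j hij => (Set.disjoint_singleton.2 hij).preimage N) hf.integrableOn
  rwa [← Set.preimage_iUnion, Set.iUnion_of_singleton, Set.preimage_univ,
    Measure.restrict_univ] at h

lemma hasSum_mul_poisson_div_succ (l : ℝ) :
    HasSum (fun k : ℕ => l * (Real.exp (-l) * l ^ k / Nat.factorial k * ((k : ℝ) + 1)⁻¹))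
      (1 - Real.exp (-l)) := by
  have hexp : HasSum (fun k : ℕ => l ^ (k + 1) / Nat.factorial (k + 1)) (Real.exp l - 1) := by
    have := (hasSum_nat_add_iff' 1).2 (NormedSpace.expSeries_div_hasSum_exp l)
    simpa [← Real.exp_eq_exp_ℝ] using this
  have hterm (k : ℕ) : l * (Real.exp (-l) * l ^ k / Nat.factorial k * ((k : ℝ) + 1)⁻¹)
      = Real.exp (-l) * (l ^ (k + 1) / Nat.factorial (k + 1)) := by
    rw [Nat.factorial_succ]
    push_cast
    field_simp
    ring
  have hsum : Real.exp (-l) * (Real.exp l - 1) = 1 - Real.exp (-l) := by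
    rw [mul_sub, ← Real.exp_add, neg_add_cancel, Real.exp_zero, mul_one]
  simpa only [hterm, hsum] using hexp.mul_left (Real.exp (-l))

section Exchangeable

variable {ι S : Type*} [Fintype ι] [MeasurableSpace S] {π : Measure S}

lemma measurePreserving_comp_perm [SigmaFinite π] (σ : Equiv.Perm ι) :
    MeasurePreserving (fun x : ι → S => x ∘ σ) (Measure.pi fun _ => π)
      (Measure.pi fun _ => π) := by
  convert measurePreserving_piCongrLeft (fun _ : ι => π) σ.symm using 1
  ext x i
  simp [MeasurableEquiv.coe_piCongrLeft, Equiv.piCongrLeft_apply]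

lemma integral_apply_div_sum_pi [IsProbabilityMeasure π] {g : S → ℝ} (hg : Measurable g)
    (hgpos : ∀ z, 0 < g z) (j : ι) :
    ∫ x, g (x j) / ∑ i, g (x i) ∂(Measure.pi fun _ => π) = (Fintype.card ι : ℝ)⁻¹ := by
  classical
  set μ := Measure.pi fun _ : ι => π
  set F : ι → (ι → S) → ℝ := fun j x => g (x j) / ∑ i, g (x i)
  have hF (j : ι) : Measurable (F j) := by fun_prop
  have hsum_pos (x : ι → S) : 0 < ∑ i, g (x i) :=
    Finset.sum_pos (fun i _ => hgpos (x i)) ⟨j, Finset.mem_univ j⟩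
  have hexch (j' : ι) : ∫ x, F j' x ∂μ = ∫ x, F j x ∂μ := by
    have hσ := measurePreserving_comp_perm (π := π) (Equiv.swap j j')
    calc ∫ x, F j' x ∂μ = ∫ x, F j (x ∘ Equiv.swap j j') ∂μ := by
          congr 1 with x
          simp only [F, Function.comp_apply, Equiv.swap_apply_left,
            Equiv.sum_comp (Equiv.swap j j') fun i => g (x i)]
      _ = ∫ x, F j x ∂μ := by
          rw [← integral_map hσ.aemeasurable (hσ.map_eq ▸ (hF j).aestronglyMeasurable),
            hσ.map_eq]
  have htotal : ∑ j', ∫ x, F j' x ∂μ = 1 := by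
    rw [← integral_finsetSum _ fun j' _ => integrable_div_of_nonneg_of_le (hF j')
      (fun x => (hgpos _).le) fun x => Finset.single_le_sum (fun i _ => (hgpos (x i)).le)
        (Finset.mem_univ j')]
    show ∫ x, ∑ j', g (x j') / ∑ i, g (x i) ∂μ = 1
    simp_rw [← Finset.sum_div, div_self (hsum_pos _).ne']
    simp [μ]
  simp_rw [hexch, Finset.sum_const, Finset.card_univ, nsmul_eq_mul] at htotal
  exact eq_inv_of_mul_eq_one_right htotal

end Exchangeable

section Marks

variable {Ω S : Type*} [MeasurableSpace Ω] [MeasurableSpace S] {P : Measure Ω}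
  {N : Ω → ℕ} {ξ : ℕ → Ω → S}

lemma map_fun_eq_pi_of_iIndepFun {ι : Type*} [Fintype ι] [IsProbabilityMeasure P]
    {π : Measure S} {X : ι → Ω → S} (hind : iIndepFun X P) (hX : ∀ i, Measurable (X i))
    (hdist : ∀ i, P.map (X i) = π) :
    P.map (fun ω i => X i ω) = Measure.pi fun _ => π := by
  simp_rw [hind.map_fun_eq_pi_map fun i => (hX i).aemeasurable, hdist]

lemma indepFun_count_marks (h : iIndepFun (m := stmt16FamMS S) (stmt16FamFun N ξ) P)
    (hN : Measurable N) (hξ : ∀ i, Measurable (ξ i)) (n : ℕ) :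
    IndepFun N (fun ω (i : Fin n) => ξ i ω) P := by
  let := stmt16FamMS S
  have hfam : ∀ o, Measurable (stmt16FamFun N ξ o) := by
    rintro (_ | i)
    · exact measurable_up.comp hN
    · exact hξ i
  have hsplit := h.indepFun_finset {none} (Finset.univ.image fun i : Fin n => some (i : ℕ))
    (by simp) hfam
  exact hsplit.comp (φ := fun v => (v ⟨none, Finset.mem_singleton_self _⟩ : ULift ℕ).down)
    (ψ := fun v (i : Fin n) =>
      v ⟨some (i : ℕ), Finset.mem_image_of_mem _ (Finset.mem_univ i)⟩)
    (by exact measurable_down.comp (measurable_pi_apply _))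
    (measurable_pi_lambda _ fun i => measurable_pi_apply _)

lemma setIntegral_preimage_count_eq_mul_integral_pi [IsProbabilityMeasure P] {π : Measure S}
    (h : iIndepFun (m := stmt16FamMS S) (stmt16FamFun N ξ) P)
    (hN : Measurable N) (hξ : ∀ i, Measurable (ξ i)) (hdist : ∀ i, P.map (ξ i) = π)
    {n : ℕ} {F : (Fin n → S) → ℝ} (hF : Measurable F) (k : ℕ) :
    ∫ ω in N ⁻¹' {k}, F (fun i => ξ i ω) ∂P
      = P.real (N ⁻¹' {k}) * ∫ x, F x ∂(Measure.pi fun _ => π) := by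
  have hX : Measurable fun ω (i : Fin n) => ξ i ω := measurable_pi_lambda _ fun i => hξ i
  have hlaw : P.map (fun ω (i : Fin n) => ξ i ω) = Measure.pi fun _ => π :=
    map_fun_eq_pi_of_iIndepFun (h.precomp (Option.some_injective ℕ) |>.precomp Fin.val_injective)
      (fun i => hξ i) fun i => hdist i
  rw [Indep.setIntegral_eq_mul hN.comap_le (indepFun_count_marks h hN hξ n) hX.aemeasurable
    ⟨{k}, measurableSet_singleton k, rfl⟩ hF.aestronglyMeasurable,
    ← integral_map hX.aemeasurable (hlaw ▸ hF.aestronglyMeasurable), hlaw]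

end Marks

/-- For a Poisson(λ) number `N` of i.i.d. marks `ξ i` (jointly independent with `N`) and a
positive measurable `g`, `λ E[ g(ξ N) / (g(ξ N) + Σ_{j<N} g(ξ j)) ] = 1 - e^{-λ}`. -/
theorem stmt16 {Ω : Type v} [MeasurableSpace Ω] (P : Measure Ω) [IsProbabilityMeasure P]
    {S : Type u} [MeasurableSpace S]
    (l : ℝ) (hl : 0 < l)
    (N : Ω → ℕ) (hNmeas : Measurable N)
    (hN : ∀ k : ℕ, P {ω | N ω = k}
      = ENNReal.ofReal (Real.exp (-l) * l ^ k / Nat.factorial k))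
    (ξ : ℕ → Ω → S) (hξ : ∀ i, Measurable (ξ i))
    (π : Measure S) [IsProbabilityMeasure π]
    (hdist : ∀ i, Measure.map (ξ i) P = π)
    (hindep : iIndepFun (m := stmt16FamMS S) (stmt16FamFun N ξ) P)
    (g : S → ℝ) (hg : Measurable g) (hgpos : ∀ z, 0 < g z) :
    l * ∫ ω, g (ξ (N ω) ω)
          / (g (ξ (N ω) ω) + ∑ j ∈ Finset.range (N ω), g (ξ j ω)) ∂P
      = 1 - Real.exp (-l) := by
  have hint : Integrable (fun ω => g (ξ (N ω) ω)
      / (g (ξ (N ω) ω) + ∑ j ∈ Finset.range (N ω), g (ξ j ω))) P :=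
    integrable_div_of_nonneg_of_le (measurable_apply_nat_index hNmeas (F := fun k ω =>
        g (ξ k ω) / (g (ξ k ω) + ∑ j ∈ Finset.range k, g (ξ j ω))) fun k => by fun_prop)
      (fun ω => (hgpos _).le)
      fun ω => le_add_of_nonneg_right (Finset.sum_nonneg fun j _ => (hgpos _).le)
  have hfiber (k : ℕ) : ∫ ω in N ⁻¹' {k}, g (ξ (N ω) ω)
      / (g (ξ (N ω) ω) + ∑ j ∈ Finset.range (N ω), g (ξ j ω)) ∂P
      = Real.exp (-l) * l ^ k / Nat.factorial k * ((k : ℝ) + 1)⁻¹ := by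
    calc _ = ∫ ω in N ⁻¹' {k}, g (ξ (Fin.last k) ω) / ∑ i : Fin (k + 1), g (ξ i ω) ∂P := by
          refine setIntegral_congr_fun (hNmeas (measurableSet_singleton k)) fun ω hω => ?_
          rw [Set.mem_preimage, Set.mem_singleton_iff] at hω
          rw [hω, Fin.sum_univ_eq_sum_range (fun j => g (ξ j ω)), Finset.sum_range_succ,
            add_comm, Fin.val_last]
      _ = P.real (N ⁻¹' {k}) * ((k : ℝ) + 1)⁻¹ := by
          rw [setIntegral_preimage_count_eq_mul_integral_pi hindep hNmeas hξ hdist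
            (F := fun x => g (x (Fin.last k)) / ∑ i, g (x i)) (by fun_prop),
            integral_apply_div_sum_pi hg hgpos, Fintype.card_fin, Nat.cast_succ]
      _ = _ := by
          change (P {ω | N ω = k}).toReal * _ = _
          rw [hN k, ENNReal.toReal_ofReal (by positivity)]
  rw [integral_eq_tsum_setIntegral_fiber hNmeas hint, tsum_congr hfiber, ← tsum_mul_left]
  exact (hasSum_mul_poisson_div_succ l).tsum_eq
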